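/- arXiv:2011.04923 — 7 statements merged into one kernel-verified Lean document; each statement's English description precedes it below -/
import Mathlib

section
/- Let M = {x_1, …, x_m} ⊂ ℝ^{n₀} be a finite set and f : M → ℝ an arbitrary mapping. Then there exists a network function F ∈ NN_ReLU(2), i.e. a ReLU network of width at most 2 (and some finite depth), such that F(x) = f(x) for all x ∈ M. -/
noncomputable section

/-- The rectified linear unit. -/
def ReLU (t : ℝ) : ℝ := max t 0

/-- `IsNetChain σ m F` : `F` is a network function of the form
`W_L ∘ A_{L-1} ∘ ⋯ ∘ A_1 + b_L` where `A_j x = σ (W_j x + b_j)` (with `σ` applied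
componentwise), and all layer widths `n_1,…,n_L` are at most `m`. -/
inductive IsNetChain (σ : ℝ → ℝ) (m : ℕ) : {a b : ℕ} → ((Fin a → ℝ) → (Fin b → ℝ)) → Prop
  | last {a b : ℕ} (W : Matrix (Fin b) (Fin a) ℝ) (v : Fin b → ℝ) (hb : b ≤ m) :
      IsNetChain σ m (fun x => W.mulVec x + v)
  | hidden {a b c : ℕ} (W : Matrix (Fin b) (Fin a) ℝ) (v : Fin b → ℝ)
      {g : (Fin b → ℝ) → (Fin c → ℝ)} (hb : b ≤ m) (hg : IsNetChain σ m g) :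
      IsNetChain σ m (fun x => g (fun i => σ (W.mulVec x i + v i)))

/-- Scalar-output network functions of width at most `m`; the class `NN_σ(m)`. -/
def IsScalarNet (σ : ℝ → ℝ) (m : ℕ) {n₀ : ℕ} (F : (Fin n₀ → ℝ) → ℝ) : Prop :=
  ∃ G : (Fin n₀ → ℝ) → (Fin 1 → ℝ), IsNetChain σ m G ∧ ∀ x, F x = G x 0

lemma relu_of_nonneg {t : ℝ} (h : 0 ≤ t) : ReLU t = t := max_eq_left h

lemma relu_of_nonpos {t : ℝ} (h : t ≤ 0) : ReLU t = 0 := max_eq_right h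

/-- The linear functional `w ↦ ∑ i, w i * d i`. -/
def dotLin (n : ℕ) (d : Fin n → ℝ) : (Fin n → ℝ) →ₗ[ℝ] ℝ where
  toFun w := ∑ i, w i * d i
  map_add' a b := by simp [add_mul, Finset.sum_add_distrib]
  map_smul' r a := by simp [Finset.mul_sum, mul_assoc]

lemma exists_injOn_linear (n : ℕ) (M : Finset (Fin n → ℝ)) :
    ∃ w : Fin n → ℝ, Set.InjOn (fun x : Fin n → ℝ => ∑ i, w i * x i) (↑M : Set (Fin n → ℝ)) := by
  classical
  set D := (M ×ˢ M).filter (fun p => p.1 ≠ p.2) with hD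
  set Bad : Set (Fin n → ℝ) := ⋃ p ∈ D, (↑(LinearMap.ker (dotLin n (p.1 - p.2))) :
    Set (Fin n → ℝ)) with hBad
  have hμ : MeasureTheory.volume Bad = 0 := by
    rw [hBad]
    refine (MeasureTheory.measure_biUnion_null_iff D.countable_toSet).2 ?_
    intro p hp
    refine MeasureTheory.Measure.addHaar_submodule _ _ ?_
    have hne : p.1 ≠ p.2 := (Finset.mem_filter.1 hp).2
    obtain ⟨j, hj⟩ := Function.ne_iff.1 hne
    intro htop
    have hmem : Pi.single j (1:ℝ) ∈ LinearMap.ker (dotLin n (p.1 - p.2)) := by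
      rw [htop]; trivial
    have h2 : ∑ i, (Pi.single j (1:ℝ) : Fin n → ℝ) i * (p.1 i - p.2 i) = 0 := by
      simpa [dotLin] using hmem
    rw [Finset.sum_eq_single j] at h2
    · simp only [Pi.single_eq_same, one_mul] at h2
      exact hj (sub_eq_zero.1 h2)
    · intro b _ hb; simp [Pi.single_apply, hb]
    · intro h; exact absurd (Finset.mem_univ j) h
  have hne : Badᶜ.Nonempty := by
    rw [Set.nonempty_compl]
    intro h
    have : MeasureTheory.volume (Set.univ : Set (Fin n → ℝ)) = 0 := by
      rw [← h]; exact hμ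
    have h2 : (0:ENNReal) < MeasureTheory.volume (Set.univ : Set (Fin n → ℝ)) :=
      MeasureTheory.Measure.measure_univ_pos.2 (by
        intro h0
        simpa [h0] using (Metric.measure_ball_pos
          (MeasureTheory.volume) (0 : Fin n → ℝ) one_pos))
    rw [this] at h2; exact lt_irrefl _ h2
  obtain ⟨w, hw⟩ := hne
  refine ⟨w, ?_⟩
  intro x hx x' hx' hxx
  by_contra hne'
  apply hw
  rw [hBad]
  refine Set.mem_biUnion (show (x, x') ∈ D by
    simp only [hD, Finset.mem_filter, Finset.mem_product]
    exact ⟨⟨Finset.mem_coe.1 hx, Finset.mem_coe.1 hx'⟩, hne'⟩) ?_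
  simp only [SetLike.mem_coe, LinearMap.mem_ker]
  show ∑ i, w i * ((x, x').1 - (x, x').2) i = 0
  simp only [Pi.sub_apply, mul_sub]
  rw [Finset.sum_sub_distrib]
  simpa using sub_eq_zero.2 hxx

/-- Main 1D induction: a width-2 chain fitting prescribed values on a finite set of
positive reals, passing frozen values through. -/
lemma chain_exists : ∀ (n : ℕ) (S : Finset ℝ), S.card ≤ n → (∀ s ∈ S, 0 < s) →
    ∀ y : ℝ → ℝ,
    ∃ β : ℝ, 0 ≤ β ∧ ∀ C : ℝ, ∃ G : (Fin 2 → ℝ) → (Fin 1 → ℝ),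
      IsNetChain ReLU 2 G ∧
      (∀ v : ℝ, 0 ≤ v → G ![0, v] 0 = v - C) ∧
      (∀ s ∈ S, ∀ v : ℝ, β ≤ v → G ![s, v] 0 = y s + v - C) := by
  intro n
  induction n with
  | zero =>
    intro S hcard _ y
    have hS : S = ∅ := Finset.card_eq_zero.1 (Nat.le_zero.1 hcard)
    refine ⟨0, le_refl _, fun C => ?_⟩
    refine ⟨fun x => (Matrix.of ![![(0:ℝ), 1]]).mulVec x + ![-C],
      IsNetChain.last _ _ (by norm_num), ?_, ?_⟩
    · intro v _
      simp [Matrix.mulVec, dotProduct, Fin.sum_univ_two]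
      ring
    · intro s hs; rw [hS] at hs; exact absurd hs (Finset.notMem_empty s)
  | succ n ih =>
    intro S hcard hpos y
    rcases S.eq_empty_or_nonempty with hS | hne
    · subst hS; exact ih ∅ (Nat.zero_le n) (by simp) y
    set s₀ := S.min' hne with hs₀def
    have hs₀mem : s₀ ∈ S := S.min'_mem hne
    have hs₀pos : 0 < s₀ := hpos s₀ hs₀mem
    set α := y s₀ / s₀ with hα
    set S' := (S.erase s₀).image (fun t => t - s₀) with hS'
    have hcard' : S'.card ≤ n := by
      have h1 : S'.card ≤ (S.erase s₀).card := Finset.card_image_le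
      have h2 : (S.erase s₀).card = S.card - 1 := Finset.card_erase_of_mem hs₀mem
      have h3 : 1 ≤ S.card := Finset.card_pos.2 hne
      omega
    have hpos' : ∀ t ∈ S', 0 < t := by
      intro t ht
      obtain ⟨s, hs, rfl⟩ := Finset.mem_image.1 ht
      have hs1 : s ∈ S := Finset.mem_of_mem_erase hs
      have hs2 : s ≠ s₀ := Finset.ne_of_mem_erase hs
      have := S.min'_le s hs1
      rw [← hs₀def] at this
      have : s₀ < s := lt_of_le_of_ne this (Ne.symm hs2)
      linarith
    set y' := fun t => y (t + s₀) - α * (t + s₀) with hy'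
    obtain ⟨β', hβ'0, H'⟩ := ih S' hcard' hpos' y'
    set B := S.max' hne with hB
    have hBpos : 0 < B := lt_of_lt_of_le hs₀pos (S.le_max' s₀ hs₀mem)
    refine ⟨β' + |α| * B, by positivity, fun C => ?_⟩
    obtain ⟨G', hG'chain, hG'a, hG'b⟩ := H' C
    set W₁ : Matrix (Fin 2) (Fin 2) ℝ := Matrix.of ![![1, 0], ![α, 1]] with hW₁
    set b₁ : Fin 2 → ℝ := ![-s₀, 0] with hb₁
    have layer_eq : ∀ u v : ℝ, (fun i => ReLU (W₁.mulVec ![u, v] i + b₁ i)) =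
        ![ReLU (u - s₀), ReLU (α * u + v)] := by
      intro u v
      funext i
      fin_cases i <;>
        (simp [hW₁, hb₁, Matrix.mulVec, dotProduct, Fin.sum_univ_two, sub_eq_add_neg])
    refine ⟨fun x => G' (fun i => ReLU (W₁.mulVec x i + b₁ i)),
      IsNetChain.hidden W₁ b₁ (le_refl 2) hG'chain, ?_, ?_⟩
    · intro v hv
      beta_reduce
      rw [layer_eq 0 v]
      rw [relu_of_nonpos (by linarith : (0:ℝ) - s₀ ≤ 0)]
      have h0 : α * 0 + v = v := by ring
      rw [h0, relu_of_nonneg hv]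
      exact hG'a v hv
    · intro s hs v hv
      have hsB : s ≤ B := S.le_max' s hs
      have hspos : 0 < s := hpos s hs
      have habs : -(α * s) ≤ |α| * B := by
        calc -(α * s) ≤ |α * s| := neg_le_abs _
          _ = |α| * s := by rw [abs_mul, abs_of_pos hspos]
          _ ≤ |α| * B := by
            apply mul_le_mul_of_nonneg_left hsB (abs_nonneg α)
      have hv' : β' ≤ α * s + v := by linarith
      have hv'0 : 0 ≤ α * s + v := le_trans hβ'0 hv'
      beta_reduce
      rw [layer_eq s v, relu_of_nonneg hv'0]
      rcases eq_or_ne s s₀ with heq | hne'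
      · rw [heq, sub_self]
        rw [relu_of_nonpos (le_refl (0:ℝ))]
        have e1 := hG'a (α * s₀ + v) (by rw [← heq]; exact hv'0)
        rw [e1]
        have e2 : α * s₀ = y s₀ := by
          rw [hα]; field_simp
        linarith [e2]
      · have hlt : s₀ < s := by
          have := S.min'_le s hs
          rw [← hs₀def] at this
          exact lt_of_le_of_ne this (Ne.symm hne')
        rw [relu_of_nonneg (by linarith)]
        have hmem : s - s₀ ∈ S' := by
          rw [hS']
          exact Finset.mem_image.2 ⟨s, Finset.mem_erase.2 ⟨hne', hs⟩, rfl⟩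
        have := hG'b (s - s₀) hmem (α * s + v) hv'
        rw [this, hy']
        simp only [sub_add_cancel]
        ring

/-- For any finite set `M ⊂ ℝ^{n₀}` and any mapping `f : M → ℝ` there
is a ReLU network function of width at most 2 fitting `f` exactly on `M`. -/
theorem exact_fit_finite_set_width_two
    (n₀ : ℕ) (M : Finset (Fin n₀ → ℝ)) (f : (Fin n₀ → ℝ) → ℝ) :
    ∃ F : (Fin n₀ → ℝ) → ℝ, IsScalarNet ReLU 2 F ∧ ∀ x ∈ M, F x = f x := by
  classical
  rcases M.eq_empty_or_nonempty with hM | hM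
  · subst hM
    exact ⟨fun x => ((0 : Matrix (Fin 1) (Fin n₀) ℝ).mulVec x + 0) 0,
      ⟨_, IsNetChain.last _ _ one_le_two, fun x => rfl⟩, by simp⟩
  obtain ⟨w, hw⟩ := exists_injOn_linear n₀ M
  set c := 1 - M.inf' hM (fun x => ∑ i, w i * x i) with hc
  set ℓ : (Fin n₀ → ℝ) → ℝ := fun x => (∑ i, w i * x i) + c with hℓ
  have hℓpos : ∀ x ∈ M, 0 < ℓ x := by
    intro x hx
    have := M.inf'_le (fun x => ∑ i, w i * x i) hx
    rw [hℓ, hc]; dsimp only; linarith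
  have hℓinj : Set.InjOn ℓ ↑M := by
    intro x hx x' hx' h
    apply hw hx hx'
    rw [hℓ] at h; dsimp only at h
    linarith
  set S := M.image ℓ with hS
  have hSpos : ∀ s ∈ S, 0 < s := by
    intro s hs
    obtain ⟨x, hx, rfl⟩ := Finset.mem_image.1 hs
    exact hℓpos x hx
  set y : ℝ → ℝ := fun t => f (Function.invFunOn ℓ ↑M t) with hy
  have hyℓ : ∀ x ∈ M, y (ℓ x) = f x := by
    intro x hx
    rw [hy]
    dsimp only
    rw [hℓinj.leftInvOn_invFunOn hx]
  obtain ⟨β, hβ0, H⟩ := chain_exists S.card S (le_refl _) hSpos y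
  obtain ⟨G, hGchain, hGa, hGb⟩ := H β
  set W₀ : Matrix (Fin 2) (Fin n₀) ℝ := Matrix.of ![w, fun _ => 0] with hW₀
  set b₀ : Fin 2 → ℝ := ![c, β] with hb₀
  have layer_eq : ∀ x ∈ M, (fun i => ReLU (W₀.mulVec x i + b₀ i)) = ![ℓ x, β] := by
    intro x hx
    funext i
    fin_cases i
    · show ReLU (W₀.mulVec x 0 + b₀ 0) = ℓ x
      have h1 : W₀.mulVec x 0 = ∑ i, w i * x i := by
        simp [hW₀, Matrix.mulVec, dotProduct]
      rw [h1]
      show ReLU ((∑ i, w i * x i) + c) = ℓ x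
      rw [hℓ]
      exact relu_of_nonneg (le_of_lt (hℓpos x hx))
    · show ReLU (W₀.mulVec x 1 + b₀ 1) = β
      have h1 : W₀.mulVec x 1 = 0 := by
        simp [hW₀, Matrix.mulVec, dotProduct]
      rw [h1, zero_add]
      exact relu_of_nonneg hβ0
  refine ⟨fun x => G (fun i => ReLU (W₀.mulVec x i + b₀ i)) 0,
    ⟨fun x => G (fun i => ReLU (W₀.mulVec x i + b₀ i)),
      IsNetChain.hidden W₀ b₀ (le_refl 2) hGchain, fun x => rfl⟩, ?_⟩
  intro x hx
  show G (fun i => ReLU (W₀.mulVec x i + b₀ i)) 0 = f x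
  rw [layer_eq x hx]
  have hmem : ℓ x ∈ S := Finset.mem_image_of_mem ℓ hx
  have := hGb (ℓ x) hmem β (le_refl β)
  rw [this, hyℓ x hx]
  ring
end
end

section
/- Let K and M be two compact sets in ℝ^{n₀} that are strictly separable by a linear hyperplane, i.e. there exist v ∈ ℝ^{n₀} with ‖v‖ = 1 and q ∈ ℝ such that vᵀx > q for all x ∈ K and vᵀx < q for all x ∈ M. Then for every ε > 0 there exists a network function F ∈ NN_ReLU^{n₀}(n₀, 2), i.e. F(x) = V ReLU(Wx + b) + d with W, V ∈ ℝ^{n₀×n₀}, b, d ∈ ℝ^{n₀}, such that F maps all of K to a single vector p ∈ ℝ^{n₀} ∖ M, F(x) = x for all x ∈ M, and min_{x∈K} ‖p − x‖ < ε. -/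
/-!
Let `x₀` minimize `⟨v, ·⟩` on `K` and put `p = x₀ - η v` with `0 < η < min ε (⟨v, x₀⟩ - q)`, so
that `⟨v, x - p⟩` is bounded below by a positive constant on `K` and above by a negative one on `M`.
As `K` and `M` are bounded, for large `t` the vector `W (x - p)` with `W = 1 - t 𝟙 vᵀ` is then
coordinatewise nonpositive on `K` and nonnegative on `M`. With `b = -W p`, `d = p` and `V = W⁻¹`
(Sherman–Morrison, which excludes one value of `t`), all hidden units are off on `K`, giving `p`,
and all are on on `M`, giving `V W (x - p) + p = x`.
-/

noncomputable section

open Matrix Filter Metric Bornology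

section Network

variable {ι κ ο : Type*} [Fintype ι] [Fintype κ]

def reluNet (W : Matrix κ ι ℝ) (V : Matrix ο κ ℝ) (b : κ → ℝ) (d : ο → ℝ) (x : ι → ℝ) :
    ο → ℝ :=
  V *ᵥ (fun k => ReLU ((W *ᵥ x) k + b k)) + d

variable (W : Matrix κ ι ℝ) (V : Matrix ο κ ℝ) (b : κ → ℝ) (d : ο → ℝ) {x : ι → ℝ}

theorem reluNet_eq_of_nonpos (hx : W *ᵥ x + b ≤ 0) : reluNet W V b d x = d := by
  have : (fun k => ReLU ((W *ᵥ x) k + b k)) = 0 := funext fun k => max_eq_right (hx k)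
  rw [reluNet, this, mulVec_zero, zero_add]

theorem reluNet_eq_of_nonneg (hx : 0 ≤ W *ᵥ x + b) :
    reluNet W V b d x = V *ᵥ (W *ᵥ x + b) + d := by
  have : (fun k => ReLU ((W *ᵥ x) k + b k)) = W *ᵥ x + b := funext fun k => max_eq_left (hx k)
  rw [reluNet, this]

end Network

section Anchored

variable {ι κ : Type*} [Fintype ι] [Fintype κ]
  {W : Matrix κ ι ℝ} (V : Matrix ι κ ℝ) {p x : ι → ℝ}

theorem reluNet_anchored_eq_of_nonpos (hx : W *ᵥ (x - p) ≤ 0) :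
    reluNet W V (-(W *ᵥ p)) p x = p :=
  reluNet_eq_of_nonpos W V _ p (by rwa [← sub_eq_add_neg, ← mulVec_sub])

theorem reluNet_anchored_eq_self_of_nonneg [DecidableEq ι] (hVW : V * W = 1)
    (hx : 0 ≤ W *ᵥ (x - p)) :
    reluNet W V (-(W *ᵥ p)) p x = x := by
  have hb : W *ᵥ x + -(W *ᵥ p) = W *ᵥ (x - p) := by rw [mulVec_sub, sub_eq_add_neg]
  rw [reluNet_eq_of_nonneg W V _ p (hb ▸ hx), hb, mulVec_mulVec, hVW, one_mulVec, sub_add_cancel]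

end Anchored

namespace Matrix

variable {ι R : Type*} [Fintype ι] [DecidableEq ι]

theorem one_sub_smul_vecMulVec_mulVec [CommRing R] (u v y : ι → R) (t : R) :
    (1 - t • vecMulVec u v) *ᵥ y = y - (t * (v ⬝ᵥ y)) • u := by
  rw [sub_mulVec, one_mulVec, smul_mulVec, vecMulVec_mulVec, op_smul_eq_smul, smul_smul]

theorem one_add_smul_vecMulVec_mul_one_sub_smul_vecMulVec [Field R] (u v : ι → R) {t : R}
    (ht : t * (v ⬝ᵥ u) ≠ 1) :
    (1 + (t / (1 - t * (v ⬝ᵥ u))) • vecMulVec u v) * (1 - t • vecMulVec u v) = 1 := by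
  have h : 1 - t * (v ⬝ᵥ u) ≠ 0 := sub_ne_zero.mpr (Ne.symm ht)
  set r := t / (1 - t * (v ⬝ᵥ u)) with hr
  have hr' : r - t - r * t * (v ⬝ᵥ u) = 0 := by rw [hr]; field_simp; ring
  rw [add_mul, mul_sub, mul_sub, one_mul, mul_one, one_mul, smul_mul_smul_comm,
    vecMulVec_mul_vecMulVec, vecMulVec_smul, smul_smul]
  calc _ = 1 + (r - t - r * t * (v ⬝ᵥ u)) • vecMulVec u v := by module
    _ = 1 := by rw [hr', zero_smul, add_zero]

end Matrix

theorem Bornology.IsBounded.eventually_forall_dist_le_mul {E : Type*} [PseudoMetricSpace E]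
    {S : Set E} (hS : IsBounded S) (p : E) {f : E → ℝ} {μ : ℝ} (hμ : 0 < μ)
    (hf : ∀ x ∈ S, μ ≤ f x) : ∀ᶠ t in atTop, ∀ x ∈ S, dist x p ≤ t * f x := by
  obtain ⟨r, hr⟩ := hS.subset_closedBall p
  filter_upwards [eventually_ge_atTop (r / μ), eventually_ge_atTop 0] with t hrt ht x hx
  calc dist x p ≤ r := hr hx
    _ ≤ t * μ := (div_le_iff₀ hμ).mp hrt
    _ ≤ t * f x := mul_le_mul_of_nonneg_left (hf x hx) ht

namespace EuclideanSpace

variable {ι : Type*} [Fintype ι]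

theorem dotProduct_self_eq_norm_sq (v : EuclideanSpace ℝ ι) : v ⬝ᵥ v = ‖v‖ ^ 2 := by
  rw [← real_inner_self_eq_norm_sq, inner_eq_star_dotProduct, star_trivial]

variable [DecidableEq ι] (v : ι → ℝ) {t : ℝ} {y : EuclideanSpace ℝ ι}

theorem one_sub_smul_vecMulVec_one_mulVec_nonpos (hy : ‖y‖ ≤ t * (v ⬝ᵥ y)) :
    (1 - t • vecMulVec 1 v : Matrix ι ι ℝ) *ᵥ y ≤ 0 := by
  rw [one_sub_smul_vecMulVec_mulVec]
  intro i
  have := (le_abs_self (y i)).trans (PiLp.norm_apply_le y i)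
  simp only [Pi.sub_apply, Pi.smul_apply, Pi.one_apply, smul_eq_mul, mul_one, Pi.zero_apply]
  linarith

theorem one_sub_smul_vecMulVec_one_mulVec_nonneg (hy : ‖y‖ ≤ t * -(v ⬝ᵥ y)) :
    0 ≤ (1 - t • vecMulVec 1 v : Matrix ι ι ℝ) *ᵥ y := by
  rw [one_sub_smul_vecMulVec_mulVec]
  intro i
  have := (neg_abs_le (y i)).trans' (neg_le_neg (PiLp.norm_apply_le y i))
  simp only [Pi.sub_apply, Pi.smul_apply, Pi.one_apply, smul_eq_mul, mul_one, Pi.zero_apply]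
  linarith

theorem exists_reluNet_collapse {K M : Set (EuclideanSpace ℝ ι)} (hK : IsBounded K)
    (hM : IsBounded M) (p : EuclideanSpace ℝ ι) {μ : ℝ} (hμ : 0 < μ)
    (hKp : ∀ x ∈ K, μ ≤ v ⬝ᵥ (x - p)) (hMp : ∀ x ∈ M, μ ≤ -(v ⬝ᵥ (x - p))) :
    ∃ (W V : Matrix ι ι ℝ) (b : ι → ℝ),
      (∀ x ∈ K, reluNet W V b p x = p) ∧ ∀ x ∈ M, reluNet W V b p x = x := by
  obtain ⟨t, htK, htM, ht⟩ := ((hK.eventually_forall_dist_le_mul p hμ hKp).and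
    ((hM.eventually_forall_dist_le_mul p hμ hMp).and
      ((eventually_ne_atTop (v ⬝ᵥ 1)⁻¹).mono fun _ h h' => h (eq_inv_of_mul_eq_one_left h'))))
    |>.exists
  refine ⟨1 - t • vecMulVec 1 v, 1 + (t / (1 - t * (v ⬝ᵥ 1))) • vecMulVec 1 v, _,
    fun x hx => reluNet_anchored_eq_of_nonpos _ ?_,
    fun x hx => reluNet_anchored_eq_self_of_nonneg _
      (one_add_smul_vecMulVec_mul_one_sub_smul_vecMulVec 1 v ht) ?_⟩
  · exact one_sub_smul_vecMulVec_one_mulVec_nonpos v (y := x - p) (dist_eq_norm x p ▸ htK x hx)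
  · exact one_sub_smul_vecMulVec_one_mulVec_nonneg v (y := x - p) (dist_eq_norm x p ▸ htM x hx)

end EuclideanSpace

open EuclideanSpace

/-- If the compact sets `K` and `M` are strictly separated by a linear
hyperplane, then for every `ε > 0` there is a two-layer ReLU network
`F x = V ReLU(W x + b) + d` of width `n₀` that collapses `K` to a single point
`p ∉ M`, is the identity on `M`, and satisfies `min_{x ∈ K} ‖p - x‖ < ε`. -/
theorem collapse_separated_compact_set
    (n₀ : ℕ) (K M : Set (EuclideanSpace ℝ (Fin n₀)))
    (hK : IsCompact K) (hM : IsCompact M)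
    (v : EuclideanSpace ℝ (Fin n₀)) (q : ℝ) (hv : ‖v‖ = 1)
    (hsepK : ∀ x ∈ K, q < dotProduct v x)
    (hsepM : ∀ x ∈ M, dotProduct v x < q)
    (ε : ℝ) (hε : 0 < ε) :
    ∃ (W V : Matrix (Fin n₀) (Fin n₀) ℝ) (b d : Fin n₀ → ℝ)
      (p : EuclideanSpace ℝ (Fin n₀)),
      (∀ x ∈ K, (WithLp.toLp 2 (V.mulVec (fun i => ReLU (W.mulVec x i + b i)) + d)
          : EuclideanSpace ℝ (Fin n₀)) = p) ∧
      (∀ x ∈ M, (WithLp.toLp 2 (V.mulVec (fun i => ReLU (W.mulVec x i + b i)) + d)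
          : EuclideanSpace ℝ (Fin n₀)) = x) ∧
      p ∉ M ∧ Metric.infDist p K < ε := by
  have hvv : v ⬝ᵥ v = 1 := by
    rw [dotProduct_self_eq_norm_sq, hv, one_pow]
  obtain ⟨x₀, hx₀q, hx₀K, hx₀dist⟩ : ∃ x₀ : EuclideanSpace ℝ (Fin n₀),
      q < v ⬝ᵥ x₀ ∧ (∀ x ∈ K, v ⬝ᵥ x₀ ≤ v ⬝ᵥ x) ∧ infDist x₀ K = 0 := by
    rcases K.eq_empty_or_nonempty with rfl | hKne
    · exact ⟨(q + 1) • v, by simp [hvv], by simp, infDist_empty⟩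
    · obtain ⟨x₀, hx₀, hmin⟩ :=
        hK.exists_isMinOn hKne
          (continuous_const.dotProduct (PiLp.continuous_ofLp 2 _)).continuousOn
      exact ⟨x₀, hsepK x₀ hx₀, fun x hx => hmin hx, infDist_zero_of_mem hx₀⟩
  obtain ⟨η, hη0, hη⟩ := exists_between (lt_min hε (sub_pos.mpr hx₀q))
  obtain ⟨hηε, hηq⟩ := lt_min_iff.mp hη
  set p := x₀ - η • v
  have hvp : v ⬝ᵥ p = v ⬝ᵥ x₀ - η := by simp [p, dotProduct_sub, hvv]
  obtain ⟨W, V, b, hKW, hMW⟩ := exists_reluNet_collapse v hK.isBounded hM.isBounded p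
    (lt_min hη0 (sub_pos.mpr hηq))
    (fun x hx => by
      rw [dotProduct_sub, hvp]; linarith [hx₀K x hx, min_le_left η (v ⬝ᵥ x₀ - q - η)])
    (fun x hx => by
      rw [dotProduct_sub, hvp]; linarith [hsepM x hx, min_le_right η (v ⬝ᵥ x₀ - q - η)])
  refine ⟨W, V, b, p, p, fun x hx => congrArg (WithLp.toLp 2) (hKW x hx),
    fun x hx => congrArg (WithLp.toLp 2) (hMW x hx), fun hpM => ?_, ?_⟩
  · linarith [hsepM p hpM]
  · calc infDist p K ≤ infDist x₀ K + dist p x₀ := infDist_le_infDist_add_dist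
      _ = η := by simp [hx₀dist, p, norm_smul, hv, hη0.le]
      _ < ε := hηε
end
end

section
/- Let M = {x_1, …, x_m} ⊂ ℝ^{n₀} be a finite set. Then for every function f : M → ℝ and every ε > 0 there exists a network function F ∈ NN_cos(1, 3), i.e. a function of the form F(x) = c · cos(u · cos(wᵀ x + b)) with w ∈ ℝ^{n₀} and u, b, c ∈ ℝ, such that max_{j=1,…,m} |f(x_j) − F(x_j)| < ε. -/
/-!
After an affine map `x ↦ w ⬝ᵥ x + b` the points of `M` become distinct positive numbers `d x`,
and it remains to find `s`, `u`, `c` with `c * cos (u * cos (d x * s)) ≈ f x`. Take `c > max |f|`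
and the angles `θ x = arccos (f x / c)`. By Kronecker's theorem, if the numbers
`t x = cos (d x * s)` are linearly independent over `ℚ`, some `u * t x` approximates `θ x`
modulo `2π` for all `x` at once. At a fixed accuracy only integer relations with coefficients
bounded by some `k` matter: without them, the mean over `u` of
`∏ x, ((1 + cos (u * t x - θ x)) / 2) ^ k` is its constant term `(choose (2k) k / 4 ^ k) ^ |M|`,
which exceeds `ρ ^ k` for any `ρ < 1` once `k` is large, so some `u` makes every factor exceed
`ρ`. Such relations fail for generic `s`: a nontrivial one is a nonzero real-analytic function of
`s` (the `cos (d x * s)` with distinct positive `d x` are linearly independent, as their means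
against `exp (-d x * s * I)` show), so its zeros are isolated.
-/

open Filter Finset Topology Real
open Complex (I)

theorem tendsto_integral_exp_mul_I_div_atTop (a : ℝ) :
    Tendsto (fun T : ℝ => (∫ u in (0 : ℝ)..T, Complex.exp (a * I * u)) / T) atTop
      (𝓝 (if a = 0 then 1 else 0)) := by
  split_ifs with h
  · refine tendsto_const_nhds.congr' ?_
    filter_upwards [eventually_ne_atTop 0] with T hT
    simp [h, div_self (Complex.ofReal_ne_zero.2 hT)]
  have hc : (a : ℂ) * I ≠ 0 := mul_ne_zero (Complex.ofReal_ne_zero.2 h) Complex.I_ne_zero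
  refine squeeze_zero_norm' ?_ ((tendsto_const_nhds (x := 2 / |a|)).div_atTop tendsto_id)
  filter_upwards [eventually_gt_atTop 0] with T hT
  have hnum : ‖Complex.exp (a * I * T) - Complex.exp (a * I * (0 : ℝ))‖ ≤ 2 :=
    (norm_sub_le _ _).trans_eq (by simp [Complex.norm_exp, one_add_one_eq_two])
  rw [integral_exp_mul_complex hc, norm_div, norm_div, Complex.norm_mul, Complex.norm_I,
    mul_one, Complex.norm_real, Complex.norm_real, Real.norm_of_nonneg hT.le, Real.norm_eq_abs]
  exact div_le_div_of_nonneg_right (div_le_div_of_nonneg_right hnum (abs_nonneg a)) hT.le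

theorem tendsto_integral_sum_exp_div_atTop {ι : Type*} (s : Finset ι) (a : ι → ℝ) (c : ι → ℂ) :
    Tendsto (fun T : ℝ => (∫ u in (0 : ℝ)..T, ∑ i ∈ s, c i * Complex.exp (a i * I * u)) / T)
      atTop (𝓝 (∑ i ∈ s with a i = 0, c i)) := by
  have hint (i : ι) (T : ℝ) :
      IntervalIntegrable (fun u : ℝ => c i * Complex.exp (a i * I * u)) MeasureTheory.volume 0 T :=
    (by fun_prop : Continuous fun u : ℝ => c i * Complex.exp (a i * I * u)).intervalIntegrable _ _
  have := tendsto_finsetSum s fun i _ =>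
    (tendsto_integral_exp_mul_I_div_atTop (a i)).const_mul (c i)
  simp only [mul_ite, mul_one, mul_zero, ← Finset.sum_filter] at this
  refine this.congr fun T => ?_
  rw [intervalIntegral.integral_finsetSum fun i _ => hint i T, Finset.sum_div]
  simp [intervalIntegral.integral_const_mul, mul_div_assoc]

variable {ι : Type*} [Fintype ι]

theorem exists_injOn_dotProduct {K : Type*} [Field K] [Infinite K]
    (M : Finset (ι → K)) : ∃ w : ι → K, Set.InjOn (w ⬝ᵥ ·) M := by
  let p : {xy : M × M // xy.1 ≠ xy.2} → Subspace K (ι → K) := fun xy =>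
    LinearMap.ker (dotProductBilin K K |>.flip (xy.1.1.1 - xy.1.2.1))
  obtain ⟨w, hw⟩ : ∃ w, w ∉ ⋃ xy, (p xy : Set (ι → K)) := by
    classical
    by_contra! h
    obtain ⟨xy, hxy⟩ := Subspace.exists_eq_top_of_iUnion_eq_univ (Set.eq_univ_of_forall h)
    obtain ⟨i, hi⟩ := Function.ne_iff.1 (sub_ne_zero.2 fun h => xy.2 (Subtype.ext h))
    have := hxy.ge (Submodule.mem_top (x := Pi.single i 1))
    exact hi (by simpa [p, dotProductBilin] using this)
  refine ⟨w, fun x hx y hy hxy => by_contra fun hne => hw ?_⟩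
  refine Set.mem_iUnion.2 ⟨⟨(⟨x, hx⟩, ⟨y, hy⟩), fun h => hne congr(Subtype.val $h)⟩, ?_⟩
  simp [p, dotProductBilin, hxy]

theorem exists_injOn_dotProduct_add_pos {K : Type*} [Field K] [LinearOrder K]
    [IsStrictOrderedRing K] (M : Finset (ι → K)) :
    ∃ (w : ι → K) (b : K), Set.InjOn (fun x => w ⬝ᵥ x + b) M ∧ ∀ x ∈ M, 0 < w ⬝ᵥ x + b := by
  obtain ⟨w, hw⟩ := exists_injOn_dotProduct M
  refine ⟨w, 1 + ∑ x ∈ M, |w ⬝ᵥ x|, fun x hx y hy h => hw hx hy (add_right_cancel h),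
    fun x hx => ?_⟩
  have := Finset.single_le_sum (fun y _ => abs_nonneg (w ⬝ᵥ y)) hx
  linarith [neg_abs_le (w ⬝ᵥ x)]

theorem eq_zero_of_forall_sum_mul_cos_eq_zero {d : ι → ℝ}
    (hd : Function.Injective d) (hpos : ∀ j, 0 < d j) {a : ι → ℝ}
    (h : ∀ s, ∑ j, a j * cos (d j * s) = 0) : a = 0 := by
  classical
  funext i
  -- Multiplying by `exp (-d i * s * I)` makes the `i`-th frequency the only vanishing one.
  let freq : ι ⊕ ι → ℝ := Sum.elim (fun j => d j - d i) (fun j => -d j - d i)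
  let coeff : ι ⊕ ι → ℂ := Sum.elim (fun j => a j / 2) (fun j => a j / 2)
  have hzero (u : ℝ) : ∑ x, coeff x * Complex.exp (freq x * I * u) = 0 := by
    have := congrArg (fun z : ℝ => Complex.exp (-d i * I * u) * z) (h u)
    simp only [Complex.ofReal_sum, Complex.ofReal_mul, Complex.ofReal_cos, Complex.ofReal_zero,
      mul_zero, Finset.mul_sum] at this
    rw [← this, Fintype.sum_sum_type, ← Finset.sum_add_distrib]
    refine Finset.sum_congr rfl fun j _ => ?_
    simp only [coeff, freq, Sum.elim_inl, Sum.elim_inr, Complex.cos, Complex.ofReal_sub,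
      Complex.ofReal_neg]
    rw [show (d j - d i : ℂ) * I * u = -d i * I * u + d j * u * I by ring,
      show (-d j - d i : ℂ) * I * u = -d i * I * u + -(d j * u) * I by ring,
      Complex.exp_add, Complex.exp_add]
    ring
  have hlim := tendsto_integral_sum_exp_div_atTop Finset.univ freq coeff
  simp only [hzero, intervalIntegral.integral_zero, zero_div] at hlim
  have hfilter : ∑ x with freq x = 0, coeff x = a i / 2 := by
    rw [Finset.sum_filter, Fintype.sum_sum_type]
    have hne (j : ι) : -d j ≠ d i := by linarith [hpos i, hpos j]
    simp [freq, coeff, sub_eq_zero, hd.eq_iff, hne]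
  have := tendsto_nhds_unique tendsto_const_nhds hlim
  rw [hfilter] at this
  exact_mod_cast (div_eq_zero_iff.1 this.symm).resolve_right two_ne_zero

def IntIndependentUpTo (k : ℕ) (t : ι → ℝ) : Prop :=
  ∀ n : ι → ℤ, (∀ j, |n j| ≤ k) → ∑ j, (n j : ℝ) * t j = 0 → n = 0

theorem eventually_sum_mul_cos_ne_zero {d : ι → ℝ}
    (hd : Function.Injective d) (hpos : ∀ j, 0 < d j) {a : ι → ℝ} (ha : a ≠ 0) (s₀ : ℝ) :
    ∀ᶠ s in 𝓝[≠] s₀, ∑ j, a j * cos (d j * s) ≠ 0 := by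
  have hg : AnalyticOnNhd ℝ (fun s => ∑ j, a j * cos (d j * s)) Set.univ :=
    fun _ _ => by fun_prop
  by_contra h
  simp only [not_eventually, not_not] at h
  exact ha (eq_zero_of_forall_sum_mul_cos_eq_zero hd hpos fun s =>
    hg.eqOn_zero_of_preconnected_of_frequently_eq_zero isPreconnected_univ (Set.mem_univ s₀) h
      (Set.mem_univ s))

theorem exists_intIndependentUpTo_cos_mul {d : ι → ℝ}
    (hd : Function.Injective d) (hpos : ∀ j, 0 < d j) (k : ℕ) :
    ∃ s, IntIndependentUpTo k fun j => cos (d j * s) := by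
  classical
  let S : Set (ι → ℤ) := Set.Icc (-k) k \ {0}
  have hS : ∀ᶠ s in 𝓝[≠] (0 : ℝ), ∀ n ∈ S, ∑ j, (n j : ℝ) * cos (d j * s) ≠ 0 :=
    ((Set.finite_Icc _ _).sdiff).eventually_all.2 fun n hn =>
      eventually_sum_mul_cos_ne_zero hd hpos (a := fun j => (n j : ℝ))
        (fun h => hn.2 (funext fun j => by simpa using congrFun h j)) 0
  obtain ⟨s, hs⟩ := hS.exists
  refine ⟨s, fun n hn hsum => by_contra fun hne => hs n ⟨?_, hne⟩ hsum⟩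
  exact ⟨fun j => neg_le_of_abs_le (hn j), fun j => le_of_abs_le (hn j)⟩

theorem ofReal_one_add_cos_div_two_pow (k : ℕ) (α : ℝ) :
    ((((1 + cos α) / 2) ^ k : ℝ) : ℂ) = ∑ r ∈ range (2 * k + 1),
      ((2 * k).choose r / 4 ^ k : ℂ) * Complex.exp (((r : ℝ) - k : ℝ) * α * I) := by
  set z := Complex.exp (α * I)
  have hz : z ≠ 0 := Complex.exp_ne_zero _
  have hcos : (((1 + cos α) / 2 : ℝ) : ℂ) = z⁻¹ * (z + 1) ^ 2 / 4 := by
    have h2cos : 2 * Complex.cos α = z + z⁻¹ := by rw [Complex.two_cos, neg_mul, Complex.exp_neg]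
    push_cast
    rw [show Complex.cos α = (z + z⁻¹) / 2 by linear_combination h2cos / 2]
    field_simp
    ring
  have hpow (r : ℕ) : z⁻¹ ^ k * z ^ r = Complex.exp (((r : ℝ) - k : ℝ) * α * I) := by
    rw [← Complex.exp_neg, ← Complex.exp_nat_mul, ← Complex.exp_nat_mul, ← Complex.exp_add]
    push_cast
    ring_nf
  rw [Complex.ofReal_pow, hcos, div_pow, mul_pow, ← pow_mul, add_pow, Finset.mul_sum,
    Finset.sum_div]
  refine Finset.sum_congr rfl fun r _ => ?_
  rw [← hpow r]
  ring

theorem ofReal_prod_one_add_cos_div_two_pow [DecidableEq ι] (k : ℕ) (α : ι → ℝ) :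
    ((∏ j, ((1 + cos (α j)) / 2) ^ k : ℝ) : ℂ) =
      ∑ r ∈ Fintype.piFinset fun _ => range (2 * k + 1), (∏ j, ((2 * k).choose (r j) / 4 ^ k : ℂ)) *
        Complex.exp ((∑ j, ((r j : ℝ) - k) * α j : ℝ) * I) := by
  rw [Complex.ofReal_prod, Finset.prod_congr rfl fun j _ => ofReal_one_add_cos_div_two_pow k (α j),
    Finset.prod_univ_sum]
  refine Finset.sum_congr rfl fun r _ => ?_
  rw [Finset.prod_mul_distrib, ← Complex.exp_sum, Complex.ofReal_sum, Finset.sum_mul]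
  simp only [Complex.ofReal_mul]

theorem tendsto_integral_prod_one_add_cos_pow_div_atTop {k : ℕ}
    {t : ι → ℝ} (ht : IntIndependentUpTo k t) (θ : ι → ℝ) :
    Tendsto (fun T : ℝ => (∫ u in (0 : ℝ)..T, ∏ j, ((1 + cos (u * t j - θ j)) / 2) ^ k) / T)
      atTop (𝓝 (((2 * k).choose k / 4 ^ k : ℝ) ^ Fintype.card ι)) := by
  classical
  let R := Fintype.piFinset fun _ : ι => range (2 * k + 1)
  let freq (r : ι → ℕ) : ℝ := ∑ j, ((r j : ℝ) - k) * t j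
  let coeff (r : ι → ℕ) : ℂ := (∏ j, ((2 * k).choose (r j) / 4 ^ k : ℂ)) *
    Complex.exp (-(∑ j, ((r j : ℝ) - k) * θ j : ℝ) * I)
  have hexpand (u : ℝ) : ((∏ j, ((1 + cos (u * t j - θ j)) / 2) ^ k : ℝ) : ℂ) =
      ∑ r ∈ R, coeff r * Complex.exp (freq r * I * u) := by
    rw [ofReal_prod_one_add_cos_div_two_pow]
    refine Finset.sum_congr rfl fun r _ => ?_
    rw [mul_assoc, ← Complex.exp_add]
    congr 2
    simp only [freq, mul_sub, Finset.sum_sub_distrib]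
    push_cast
    rw [sub_mul, neg_mul, neg_add_eq_sub]
    simp only [Finset.sum_mul]
    exact congrArg (· - _) (Finset.sum_congr rfl fun j _ => by ring)
  -- By `ht`, the only vanishing frequency is that of the constant term `r = fun _ => k`.
  have hfilter : {r ∈ R | freq r = 0} = {fun _ => k} := by
    ext r
    simp only [Finset.mem_filter, Finset.mem_singleton, R, Fintype.mem_piFinset, Finset.mem_range]
    constructor
    · rintro ⟨hr, h0⟩
      have := ht (fun j => (r j : ℤ) - k) (fun j => abs_le.2 ⟨by omega, by have := hr j; omega⟩)
        (by simpa [freq] using h0)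
      funext j
      have := congrFun this j
      simp only [Pi.zero_apply] at this
      omega
    · rintro rfl
      simpa [freq] using fun _ => by omega
  have hcoeff : coeff (fun _ => k) = (((2 * k).choose k / 4 ^ k : ℝ) ^ Fintype.card ι : ℝ) := by
    simp [coeff, Finset.prod_const, div_pow]
  have hlim := tendsto_integral_sum_exp_div_atTop R freq coeff
  rw [hfilter, Finset.sum_singleton, hcoeff] at hlim
  refine ((Complex.continuous_re.tendsto _).comp hlim).congr fun T => ?_
  simp only [Function.comp_apply, ← hexpand, intervalIntegral.integral_ofReal]
  norm_cast

theorem exists_lt_of_tendsto_integral_div_atTop {g : ℝ → ℝ} (hg : Continuous g) {A c : ℝ}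
    (hlim : Tendsto (fun T : ℝ => (∫ u in (0 : ℝ)..T, g u) / T) atTop (𝓝 A)) (hc : c < A) :
    ∃ u, c < g u := by
  by_contra! h
  refine hc.not_ge (le_of_tendsto hlim ?_)
  filter_upwards [eventually_gt_atTop 0] with T hT
  rw [div_le_iff₀ hT]
  calc ∫ u in (0 : ℝ)..T, g u ≤ ∫ _ in (0 : ℝ)..T, c :=
        intervalIntegral.integral_mono_on hT.le (hg.intervalIntegrable _ _)
          intervalIntegrable_const fun u _ => h u
    _ = c * T := by simp [mul_comm]

theorem exists_pow_lt_choose_div_pow {ρ : ℝ} (hρ0 : 0 ≤ ρ) (hρ1 : ρ < 1) (m : ℕ) :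
    ∃ k : ℕ, ρ ^ k < ((2 * k).choose k / 4 ^ k : ℝ) ^ m := by
  have hlim : Tendsto (fun k : ℕ => (3 : ℝ) ^ m * ((k : ℝ) ^ m * ρ ^ k)) atTop (𝓝 0) := by
    simpa using (tendsto_pow_const_mul_const_pow_of_abs_lt_one m
      (abs_lt.2 ⟨by linarith, hρ1⟩)).const_mul ((3 : ℝ) ^ m)
  obtain ⟨k, hk, hk1⟩ :=
    ((hlim.eventually (gt_mem_nhds one_pos)).and (eventually_ge_atTop 1)).exists
  refine ⟨k, ?_⟩
  have hk1' : (1 : ℝ) ≤ k := by exact_mod_cast hk1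
  have hchoose : (1 / (2 * k + 1) : ℝ) ≤ (2 * k).choose k / 4 ^ k := by
    rw [div_le_div_iff₀ (by positivity) (by positivity), one_mul, mul_comm]
    exact_mod_cast Nat.four_pow_le_two_mul_add_one_mul_central_binom k
  refine lt_of_lt_of_le ?_ (pow_le_pow_left₀ (by positivity) hchoose m)
  rw [div_pow, one_pow, lt_div_iff₀ (by positivity)]
  calc ρ ^ k * (2 * k + 1) ^ m ≤ ρ ^ k * (3 * k) ^ m := by gcongr; linarith
    _ = (3 : ℝ) ^ m * ((k : ℝ) ^ m * ρ ^ k) := by ring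
    _ < 1 := hk

theorem sq_cos_sub_cos_le (a b : ℝ) : (cos a - cos b) ^ 2 ≤ 2 * (1 - cos (a - b)) := by
  nlinarith [cos_sub a b, sin_sq_add_cos_sq a, sin_sq_add_cos_sq b, sq_nonneg (sin a - sin b)]

variable (ι) in
theorem exists_forall_abs_cos_mul_sub_cos_lt {δ : ℝ} (hδ : 0 < δ) :
    ∃ k : ℕ, ∀ t : ι → ℝ, IntIndependentUpTo k t → ∀ θ : ι → ℝ,
      ∃ u, ∀ j, |cos (u * t j) - cos (θ j)| < δ := by
  -- `ρ < (1 + cos x) / 2` forces `2 * (1 - cos x) < δ ^ 2`, which suits `sq_cos_sub_cos_le`.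
  set ρ := max 0 (1 - δ ^ 2 / 4)
  obtain ⟨k, hk⟩ := exists_pow_lt_choose_div_pow (le_max_left 0 (1 - δ ^ 2 / 4))
    (max_lt one_pos (by nlinarith)) (Fintype.card ι)
  refine ⟨k, fun t ht θ => ?_⟩
  have hfactor (x : ℝ) : 0 ≤ (1 + cos x) / 2 ∧ (1 + cos x) / 2 ≤ 1 :=
    ⟨by linarith [neg_one_le_cos x], by linarith [cos_le_one x]⟩
  obtain ⟨u, hu⟩ := exists_lt_of_tendsto_integral_div_atTop (by fun_prop)
    (tendsto_integral_prod_one_add_cos_pow_div_atTop ht θ) hk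
  refine ⟨u, fun j => abs_lt_of_sq_lt_sq ?_ hδ.le⟩
  have hj : ρ ^ k < ((1 + cos (u * t j - θ j)) / 2) ^ k := by
    refine hu.trans_le ?_
    simpa using Finset.prod_le_prod_of_subset_of_le_one (Finset.subset_univ {j})
      (fun i _ => pow_nonneg (hfactor _).1 k) fun i _ _ => pow_le_one₀ (hfactor _).1 (hfactor _).2
  have hρj : ρ < (1 + cos (u * t j - θ j)) / 2 := lt_of_pow_lt_pow_left₀ k (hfactor _).1 hj
  nlinarith [sq_cos_sub_cos_le (u * t j) (θ j), le_max_right 0 (1 - δ ^ 2 / 4)]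

theorem exists_forall_abs_sub_mul_cos_mul_lt (y : ι → ℝ) {ε : ℝ}
    (hε : 0 < ε) : ∃ k : ℕ, ∀ t : ι → ℝ, IntIndependentUpTo k t →
      ∃ c u : ℝ, ∀ j, |y j - c * cos (u * t j)| < ε := by
  set c := 1 + ∑ j, |y j|
  have hyc (j : ι) : |y j| < c := by
    have := Finset.single_le_sum (fun i _ => abs_nonneg (y i)) (Finset.mem_univ j)
    linarith
  have hc : 0 < c := by positivity
  obtain ⟨k, hk⟩ := exists_forall_abs_cos_mul_sub_cos_lt ι (div_pos hε hc)
  refine ⟨k, fun t ht => ?_⟩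
  obtain ⟨u, hu⟩ := hk t ht fun j => arccos (y j / c)
  refine ⟨c, u, fun j => ?_⟩
  have hyj := abs_lt.1 (hyc j)
  have hcos : cos (arccos (y j / c)) = y j / c :=
    cos_arccos ((le_div_iff₀ hc).2 (by linarith)) ((div_le_one hc).2 (by linarith))
  calc |y j - c * cos (u * t j)| = c * |cos (u * t j) - cos (arccos (y j / c))| := by
        rw [hcos, ← abs_of_pos hc, ← abs_mul, abs_sub_comm, abs_of_pos hc, mul_sub,
          mul_div_cancel₀ _ hc.ne']
    _ < c * (ε / c) := by gcongr; exact hu j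
    _ = ε := mul_div_cancel₀ _ hc.ne'

/-- Any function on a finite set `M ⊂ ℝ^{n₀}` can be approximated with
arbitrary accuracy by three-layer cosine networks of width one, i.e. functions of the
form `F x = c * cos (u * cos (wᵀ x + b))`. -/
theorem universal_approx_finite_set_cosine_width_one
    (n₀ : ℕ) (M : Finset (Fin n₀ → ℝ)) (f : (Fin n₀ → ℝ) → ℝ)
    (ε : ℝ) (hε : 0 < ε) :
    ∃ (w : Fin n₀ → ℝ) (u b c : ℝ),
      ∀ x ∈ M, |f x - c * Real.cos (u * Real.cos (dotProduct w x + b))| < ε := by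
  obtain ⟨k, hk⟩ := exists_forall_abs_sub_mul_cos_mul_lt (fun x : M => f x) hε
  obtain ⟨w, b, hinj, hpos⟩ := exists_injOn_dotProduct_add_pos M
  obtain ⟨s, hs⟩ := exists_intIndependentUpTo_cos_mul (d := fun x : M => w ⬝ᵥ x + b)
    (fun x y h => Subtype.ext (hinj x.2 y.2 h)) (fun x => hpos x x.2) k
  obtain ⟨c, u, hu⟩ := hk _ hs
  refine ⟨s • w, u, s * b, c, fun x hx => ?_⟩
  have harg : (s • w) ⬝ᵥ x + s * b = (w ⬝ᵥ x + b) * s := by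
    rw [smul_dotProduct, smul_eq_mul]
    ring
  simpa only [harg] using hu ⟨x, hx⟩
end

section
/- Let M be a nonempty compact subset of ℝ^{n₀} and let σ : ℝ → ℝ be a continuous monotone activation function. Then every network function F ∈ NN_σ(n₀), i.e. every network function F : ℝ^{n₀} → ℝ with activation σ whose every layer has width at most n₀, attains its maximum value over M at a point of the boundary ∂M; that is, there exists x* ∈ ∂M with F(x*) = max_{x∈M} F(x). -/
/-!
Call a function good if on every nonempty compact set it attains its maximum at a frontier point.
Goodness passes from `g` to `g ∘ Φ` when `Φ` is continuous and every frontier point of the image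
of a compact set is the image of a frontier point. An affine layer `x ↦ W x + v` whose width does
not exceed its input dimension either has a nontrivial kernel, so that everything computed from
it is constant along lines, which leave every compact set, or it is an open map, and open maps have
the frontier property. The componentwise activation has convex fibres: a fibre either leaves the
interior of `K`, and then meets its frontier by connectedness, or it is a compact box inside the
interior, and then, `σ` being strictly monotone just outside each factor of the box, a neighbourhood
of the box is mapped onto a neighbourhood of its value, so that the value is not on the frontier of
the image. Induction over the layers finishes the proof.
-/

noncomputable section

open Set Metric Filter Topology Matrix

section MaxOnFrontier

variable {X Y β : Type*} [TopologicalSpace X] [TopologicalSpace Y]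

def AttainsMaxOnFrontier [Preorder β] (f : X → β) : Prop :=
  ∀ K : Set X, IsCompact K → K.Nonempty → ∃ x ∈ frontier K, IsMaxOn f K x

theorem IsPreconnected.inter_frontier_nonempty_of_not_subset_interior {C K : Set X}
    (hC : IsPreconnected C) {x : X} (hxC : x ∈ C) (hxK : x ∈ K) (hCK : ¬C ⊆ interior K) :
    (C ∩ frontier K).Nonempty := by
  by_cases hx : x ∈ interior K
  · by_contra h
    refine hCK (hC.subset_of_closure_inter_subset isOpen_interior ⟨x, hxC, hx⟩ ?_)
    rintro y ⟨hy, hyC⟩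
    by_contra hyi
    exact h ⟨y, hyC, closure_mono interior_subset hy, hyi⟩
  · exact ⟨x, hxC, subset_closure hxK, hx⟩

theorem IsOpenMap.frontier_image_subset [T2Space Y] {Φ : X → Y} (ho : IsOpenMap Φ)
    (hc : Continuous Φ) {K : Set X} (hK : IsCompact K) : frontier (Φ '' K) ⊆ Φ '' frontier K := by
  rintro _ ⟨hy, hyi⟩
  rw [(hK.image hc).isClosed.closure_eq] at hy
  obtain ⟨x, hxK, rfl⟩ := hy
  exact ⟨x, ⟨subset_closure hxK, fun hx => hyi (ho.image_interior_subset K ⟨x, hx, rfl⟩)⟩, rfl⟩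

theorem IsOpenMap.attainsMaxOnFrontier [LinearOrder β] [TopologicalSpace β] [OrderTopology β]
    [DenselyOrdered β] [NoMaxOrder β] {f : X → β} (ho : IsOpenMap f) (hc : Continuous f) :
    AttainsMaxOnFrontier f := by
  intro K hK hne
  obtain ⟨x, hxK, hmax⟩ := hK.exists_isMaxOn hne hc.continuousOn
  refine ⟨x, ⟨subset_closure hxK, fun hx => ?_⟩, hmax⟩
  have hnhds : ∀ᶠ y in 𝓝 (f x), y ∈ f '' interior K :=
    (ho _ isOpen_interior).mem_nhds (mem_image_of_mem f hx)
  obtain ⟨_, hlt, z, hz, rfl⟩ := hnhds.exists_gt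
  exact (hmax (interior_subset hz)).not_gt hlt

theorem AttainsMaxOnFrontier.comp [Preorder β] {g : Y → β} (hg : AttainsMaxOnFrontier g)
    {Φ : X → Y} (hc : Continuous Φ)
    (hΦ : ∀ K : Set X, IsCompact K → frontier (Φ '' K) ⊆ Φ '' frontier K) :
    AttainsMaxOnFrontier (g ∘ Φ) := by
  intro K hK hne
  obtain ⟨y, hy, hmax⟩ := hg _ (hK.image hc) (hne.image Φ)
  obtain ⟨x, hx, rfl⟩ := hΦ K hK hy
  exact ⟨x, hx, hmax.comp_mapsTo (mapsTo_image Φ K) rfl⟩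

end MaxOnFrontier

section NormedSpace

variable {E β : Type*} [NormedAddCommGroup E] [NormedSpace ℝ E]

theorem IsCompact.exists_add_smul_mem_frontier {K : Set E} (hK : IsCompact K) {x u : E}
    (hx : x ∈ K) (hu : u ≠ 0) : ∃ t : ℝ, x + t • u ∈ frontier K := by
  obtain ⟨C, hC⟩ := hK.isBounded.exists_norm_le
  have hout : ¬(range fun t : ℝ => x + t • u) ⊆ interior K := by
    intro h
    set t := (C + ‖x‖ + 1) / ‖u‖
    have hCt : ‖x + t • u‖ ≤ C := hC _ (interior_subset (h ⟨t, rfl⟩))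
    have htu : t * ‖u‖ = C + ‖x‖ + 1 := div_mul_cancel₀ _ (norm_ne_zero_iff.2 hu)
    have hle : t * ‖u‖ ≤ ‖x + t • u‖ + ‖x‖ := calc
      t * ‖u‖ ≤ ‖t • u‖ := by rw [norm_smul, Real.norm_eq_abs]; gcongr; exact le_abs_self t
      _ = ‖(x + t • u) - x‖ := by rw [add_sub_cancel_left]
      _ ≤ ‖x + t • u‖ + ‖x‖ := norm_sub_le _ _
    linarith
  have hline : IsPreconnected (range fun t : ℝ => x + t • u) := isPreconnected_range (by fun_prop)
  obtain ⟨_, ⟨t, rfl⟩, ht⟩ :=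
    hline.inter_frontier_nonempty_of_not_subset_interior ⟨0, by simp⟩ hx hout
  exact ⟨t, ht⟩

theorem attainsMaxOnFrontier_of_add_smul [LinearOrder β] [TopologicalSpace β]
    [ClosedIciTopology β] {f : E → β} (hf : Continuous f) {u : E} (hu : u ≠ 0)
    (hfu : ∀ x (t : ℝ), f (x + t • u) = f x) : AttainsMaxOnFrontier f := by
  intro K hK hne
  obtain ⟨x, hxK, hmax⟩ := hK.exists_isMaxOn hne hf.continuousOn
  obtain ⟨t, ht⟩ := hK.exists_add_smul_mem_frontier hxK hu
  rw [isMaxOn_iff] at hmax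
  exact ⟨_, ht, isMaxOn_iff.2 fun y hy => (hfu x t).symm ▸ hmax y hy⟩

end NormedSpace

section Activation

variable {ι : Type*} [Fintype ι] {σ : ℝ → ℝ}

theorem pi_thickening_subset_thickening_pi {X : ι → Type*} [∀ i, PseudoMetricSpace (X i)]
    {δ : ℝ} (hδ : 0 < δ) (S : ∀ i, Set (X i)) :
    univ.pi (fun i => thickening δ (S i)) ⊆ thickening δ (univ.pi S) := by
  intro x hx
  choose z hz hdist using fun i => mem_thickening_iff.1 (hx i trivial)
  exact mem_thickening_iff.2 ⟨z, fun i _ => hz i, (dist_pi_lt_iff hδ).2 hdist⟩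

theorem ordConnected_preimage_singleton (hσm : Monotone σ ∨ Antitone σ) (c : ℝ) :
    (σ ⁻¹' {c}).OrdConnected :=
  hσm.elim ordConnected_singleton.preimage_mono ordConnected_singleton.preimage_anti

theorem image_thickening_preimage_singleton_mem_nhds (hσc : Continuous σ)
    (hσm : Monotone σ ∨ Antitone σ) {c : ℝ} (hc : IsCompact (σ ⁻¹' {c}))
    (hne : (σ ⁻¹' {c}).Nonempty) {δ : ℝ} (hδ : 0 < δ) :
    σ '' thickening δ (σ ⁻¹' {c}) ∈ 𝓝 c := by
  set S := σ ⁻¹' {c}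
  obtain ⟨α, hα, hαS⟩ := hc.exists_isLeast hne
  obtain ⟨β, hβ, hβS⟩ := hc.exists_isGreatest hne
  set a := α - δ / 2 with ha_def
  set b := β + δ / 2 with hb_def
  have ha : σ a ≠ c := fun h => by linarith [hαS (show a ∈ S from h)]
  have hb : σ b ≠ c := fun h => by linarith [hβS (show b ∈ S from h)]
  have haα : a ≤ α := by linarith
  have hαb : α ≤ b := by linarith [hαS hβ]
  have hσα : σ α = c := hα
  have hc_mem : c ∈ Ioo (min (σ a) (σ b)) (max (σ a) (σ b)) := by
    rcases hσm with h | h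
    · have h₁ := h haα
      have h₂ := h hαb
      rw [hσα] at h₁ h₂
      exact ⟨min_lt_of_left_lt (h₁.lt_of_ne ha), lt_max_of_lt_right (h₂.lt_of_ne hb.symm)⟩
    · have h₁ := h haα
      have h₂ := h hαb
      rw [hσα] at h₁ h₂
      exact ⟨min_lt_of_right_lt (h₂.lt_of_ne hb), lt_max_of_lt_left (h₁.lt_of_ne ha.symm)⟩
  have hnear : ∀ z ∈ S, ∀ w, |w - z| < δ → w ∈ thickening δ S := fun z hz w hw =>
    ball_subset_thickening hz δ (by rwa [mem_ball, Real.dist_eq])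
  have hab : uIcc a b ⊆ thickening δ S :=
    ((ordConnected_preimage_singleton hσm c).convex.thickening δ).ordConnected.uIcc_subset
      (hnear α hα a (by rw [abs_lt]; constructor <;> linarith))
      (hnear β hβ b (by rw [abs_lt]; constructor <;> linarith))
  refine mem_of_superset (Ioo_mem_nhds hc_mem.1 hc_mem.2) ?_
  exact Ioo_subset_Icc_self.trans
    ((intermediate_value_uIcc hσc.continuousOn).trans (image_mono hab))

theorem mem_interior_image_piMap_of_pi_preimage_subset (hσc : Continuous σ)
    (hσm : Monotone σ ∨ Antitone σ) {U : Set (ι → ℝ)} (hU : IsOpen U) {y : ι → ℝ}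
    (hsub : univ.pi (fun j => σ ⁻¹' {y j}) ⊆ U) (hcpt : IsCompact (univ.pi fun j => σ ⁻¹' {y j}))
    (hne : (univ.pi fun j => σ ⁻¹' {y j}).Nonempty) :
    y ∈ interior (Pi.map (fun _ => σ) '' U) := by
  obtain ⟨δ, hδ, hthick⟩ := hcpt.exists_thickening_subset_open hU hsub
  have hfactor : ∀ j, IsCompact (σ ⁻¹' {y j}) := fun j =>
    eval_image_univ_pi hne ▸ hcpt.image (continuous_apply j)
  rw [mem_interior_iff_mem_nhds]
  refine mem_of_superset (set_pi_mem_nhds finite_univ fun j _ =>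
    image_thickening_preimage_singleton_mem_nhds hσc hσm (hfactor j)
      (univ_pi_nonempty_iff.1 hne j) hδ) ?_
  rw [← piMap_image_univ_pi]
  exact image_mono ((pi_thickening_subset_thickening_pi hδ _).trans hthick)

theorem frontier_image_piMap_subset (hσc : Continuous σ) (hσm : Monotone σ ∨ Antitone σ)
    {K : Set (ι → ℝ)} (hK : IsCompact K) :
    frontier (Pi.map (fun _ => σ) '' K) ⊆ Pi.map (fun _ => σ) '' frontier K := by
  set Φ := Pi.map fun _ : ι => σ
  have hc : Continuous Φ := .piMap fun _ => hσc
  rintro _ ⟨hy, hyi⟩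
  rw [(hK.image hc).isClosed.closure_eq] at hy
  obtain ⟨x₀, hx₀K, rfl⟩ := hy
  have hfiber : Φ ⁻¹' {Φ x₀} = univ.pi fun j => σ ⁻¹' {σ (x₀ j)} := by
    ext x
    simp [Φ, funext_iff]
  by_cases hsub : Φ ⁻¹' {Φ x₀} ⊆ interior K
  · have hcpt :=
      hK.of_isClosed_subset (isClosed_singleton.preimage hc) (hsub.trans interior_subset)
    rw [hfiber] at hsub hcpt
    exact absurd (interior_mono (image_mono interior_subset)
      (mem_interior_image_piMap_of_pi_preimage_subset hσc hσm isOpen_interior hsub hcpt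
        ⟨x₀, fun j _ => rfl⟩)) hyi
  · have hconv : Convex ℝ (Φ ⁻¹' {Φ x₀}) :=
      hfiber ▸ convex_pi fun j _ => (ordConnected_preimage_singleton hσm _).convex
    obtain ⟨x, hx, hxK⟩ :=
      hconv.isPreconnected.inter_frontier_nonempty_of_not_subset_interior rfl hx₀K hsub
    exact ⟨x, hxK, hx⟩

end Activation

theorem Matrix.card_le_card_of_mulVec_injective {m n : Type*} [Fintype m] [Fintype n]
    {W : Matrix m n ℝ} (hW : Function.Injective W.mulVec) : Fintype.card n ≤ Fintype.card m := by
  simpa using LinearMap.finrank_le_finrank_of_injective (f := W.mulVecLin) hW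

theorem Matrix.isOpenMap_mulVec_add {m n : Type*} [Fintype m] [Fintype n] {W : Matrix m n ℝ}
    (hW : Function.Injective W.mulVec) (hcard : Fintype.card m ≤ Fintype.card n) (v : m → ℝ) :
    IsOpenMap fun x => W *ᵥ x + v := by
  have hsurj : Function.Surjective W.mulVecLin :=
    (LinearMap.injective_iff_surjective_of_finrank_eq_finrank (by
      simpa using (W.card_le_card_of_mulVec_injective hW).antisymm hcard)).1 hW
  exact (isOpenMap_add_right v).comp (W.mulVecLin.isOpenMap_of_finiteDimensional hsurj)

theorem attainsMaxOnFrontier_comp_mulVec_add {m n β : Type*} [Fintype n] [LinearOrder β]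
    [TopologicalSpace β] [ClosedIciTopology β] {f : (m → ℝ) → β} (hf : Continuous f)
    {W : Matrix m n ℝ} (hW : ¬Function.Injective W.mulVec) (v : m → ℝ) :
    AttainsMaxOnFrontier fun x => f (W *ᵥ x + v) := by
  obtain ⟨u, hu, hWu⟩ : ∃ u, u ≠ 0 ∧ W *ᵥ u = 0 := by
    by_contra! h
    exact hW ((injective_iff_map_eq_zero W.mulVecLin).2 fun u hWu => not_not.1 (h u · hWu))
  exact attainsMaxOnFrontier_of_add_smul (by fun_prop) hu fun x t => by
    simp [mulVec_add, mulVec_smul, hWu]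

section Network

variable {σ : ℝ → ℝ} {m : ℕ}

theorem IsNetChain.continuous (hσc : Continuous σ) {a c : ℕ}
    {G : (Fin a → ℝ) → (Fin c → ℝ)} (hG : IsNetChain σ m G) : Continuous G := by
  induction hG with
  | last W v _ => fun_prop
  | hidden W v _ _ ih => exact ih.comp ((Continuous.piMap fun _ => hσc).comp (by fun_prop))

theorem IsNetChain.attainsMaxOnFrontier (hσc : Continuous σ) (hσm : Monotone σ ∨ Antitone σ)
    {a c : ℕ} {G : (Fin a → ℝ) → (Fin c → ℝ)} (hG : IsNetChain σ m G) (ha : m ≤ a) (i : Fin c) :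
    AttainsMaxOnFrontier fun x => G x i := by
  induction hG with
  | @last a b W v hb =>
    by_cases hW : Function.Injective W.mulVec
    · have hA := W.isOpenMap_mulVec_add hW (by simpa using hb.trans ha) v
      exact ((isOpenMap_eval i).comp hA).attainsMaxOnFrontier (by fun_prop)
    · exact attainsMaxOnFrontier_comp_mulVec_add (continuous_apply i) hW v
  | @hidden a b c W v g hb hg ih =>
    by_cases hW : Function.Injective W.mulVec
    · have hba : a ≤ b := by simpa using W.card_le_card_of_mulVec_injective hW
      have hA := W.isOpenMap_mulVec_add hW (by simpa using hb.trans ha) v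
      have hAc : Continuous fun x => W *ᵥ x + v := by fun_prop
      have hgσ := (ih (ha.trans hba) i).comp (.piMap fun _ => hσc)
        fun K hK => frontier_image_piMap_subset hσc hσm hK
      exact hgσ.comp hAc fun K hK => hA.frontier_image_subset hAc hK
    · have hgσ : Continuous fun y => g (Pi.map (fun _ => σ) y) i :=
        ((continuous_apply i).comp (hg.continuous hσc)).comp (.piMap fun _ => hσc)
      exact attainsMaxOnFrontier_comp_mulVec_add hgσ hW v

end Network

/-- **Maximum principle.** For a continuous monotone activation `σ`, every
scalar network function of width at most the input dimension `n₀` attains its maximum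
over a nonempty compact set `M` at a boundary point of `M`. -/
theorem maximum_principle
    (n₀ : ℕ) (M : Set (Fin n₀ → ℝ)) (hM : IsCompact M) (hMne : M.Nonempty)
    (σ : ℝ → ℝ) (hσc : Continuous σ) (hσm : Monotone σ ∨ Antitone σ)
    (F : (Fin n₀ → ℝ) → ℝ) (hF : IsScalarNet σ n₀ F) :
    ∃ x₀ ∈ frontier M, x₀ ∈ M ∧ ∀ x ∈ M, F x ≤ F x₀ := by
  obtain ⟨G, hG, hFG⟩ := hF
  obtain ⟨x₀, hx₀, hmax⟩ := hG.attainsMaxOnFrontier hσc hσm le_rfl 0 M hM hMne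
  refine ⟨x₀, hx₀, hM.isClosed.frontier_subset hx₀, fun x hx => ?_⟩
  rw [hFG, hFG]
  exact hmax hx
end
end

section
/- Let M be a compact subset of ℝ^{n₀}, let F ∈ NN_ReLU^{n₀}(n₀) be a ReLU network function from ℝ^{n₀} to ℝ^{n₀} with all layer widths at most n₀, and let B = F^{-1}((F(M))°) be the inverse image of the set of interior points of F(M). Then F is linear affine on B, i.e. there exist a matrix A ∈ ℝ^{n₀×n₀} and c ∈ ℝ^{n₀} with F(x) = Ax + c for all x ∈ B, and F restricted to B is a bijection from B onto (F(M))°. -/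
noncomputable section

lemma mulVec_continuous' {a b : ℕ} (W : Matrix (Fin b) (Fin a) ℝ) :
    Continuous fun x => W.mulVec x :=
  LinearMap.continuous_of_finiteDimensional (Matrix.mulVecLin W)

lemma continuous_ReLU : Continuous ReLU := continuous_id.max continuous_const

/-- If an affine image of `ℝ^a` in `ℝ^b` covers a nonempty open set, the linear part
is surjective. -/
lemma surjective_of_open_subset {a b : ℕ} (W : Matrix (Fin b) (Fin a) ℝ) (v : Fin b → ℝ)
    (V : Set (Fin b → ℝ)) (hV : IsOpen V) (hne : V.Nonempty)
    (hsub : ∀ u ∈ V, ∃ x, W.mulVec x + v = u) :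
    Function.Surjective W.mulVec := by
  have h1 : (fun u => u + (-v)) '' V ⊆ (LinearMap.range (Matrix.mulVecLin W) : Set _) := by
    rintro _ ⟨u, hu, rfl⟩
    obtain ⟨x, hx⟩ := hsub u hu
    exact ⟨x, by simp [Matrix.mulVecLin_apply, ← hx]⟩
  have h2 : IsOpen ((fun u => u + (-v)) '' V) :=
    (Homeomorph.addRight (-v)).isOpenMap V hV
  obtain ⟨u0, hu0⟩ := hne
  have hint : (interior (LinearMap.range (Matrix.mulVecLin W) : Set _)).Nonempty :=
    ⟨u0 + (-v), interior_maximal h1 h2 ⟨u0, hu0, rfl⟩⟩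
  have htop : LinearMap.range (Matrix.mulVecLin W) = ⊤ :=
    Submodule.eq_top_of_nonempty_interior' _ hint
  intro y
  have : y ∈ LinearMap.range (Matrix.mulVecLin W) := htop ▸ Submodule.mem_top
  obtain ⟨x, hx⟩ := this
  exact ⟨x, hx⟩

lemma le_of_mulVec_surjective {a b : ℕ} (W : Matrix (Fin b) (Fin a) ℝ)
    (h : Function.Surjective W.mulVec) : b ≤ a := by
  have hr : LinearMap.range (Matrix.mulVecLin W) = ⊤ := LinearMap.range_eq_top.2 h
  have := LinearMap.finrank_range_le (Matrix.mulVecLin W)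
  rw [hr, finrank_top] at this
  simpa using this

lemma injective_of_mulVec_surjective {a b : ℕ} (W : Matrix (Fin b) (Fin a) ℝ)
    (hab : a = b) (h : Function.Surjective W.mulVec) : Function.Injective W.mulVec := by
  have : Function.Injective (Matrix.mulVecLin W) :=
    (LinearMap.injective_iff_surjective_of_finrank_eq_finrank (by simp [hab])).2 h
  exact this

/-- Key induction: a narrow ReLU chain with nonempty interior of image of a compact
set agrees on the preimage of that interior with an invertible affine map. -/
lemma IsNetChain.key {m : ℕ} : ∀ {a b : ℕ} {F : (Fin a → ℝ) → (Fin b → ℝ)},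
    IsNetChain ReLU m F → a ≤ m → m ≤ b → ∀ M : Set (Fin a → ℝ), IsCompact M →
    (interior (F '' M)).Nonempty →
    b ≤ a ∧ ∃ (A : Matrix (Fin b) (Fin a) ℝ) (c : Fin b → ℝ),
      Function.Bijective A.mulVec ∧
      ∀ x, F x ∈ interior (F '' M) → F x = A.mulVec x + c := by
  intro a b F hF
  induction hF with
  | @last a' b' W v hb =>
      intro ham hmb M hM hne
      have hWsurj : Function.Surjective W.mulVec := by
        apply surjective_of_open_subset W v _ isOpen_interior hne
        intro u hu
        obtain ⟨x, _, hx⟩ := interior_subset hu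
        exact ⟨x, hx⟩
      have hba : b' ≤ a' := le_of_mulVec_surjective W hWsurj
      have hab : a' = b' := le_antisymm (ham.trans hmb) hba
      exact ⟨hba, W, v, ⟨injective_of_mulVec_surjective W hab hWsurj, hWsurj⟩,
        fun x _ => rfl⟩
  | @hidden a b c W v g hb hg ih =>
      intro ham hmc M hM hne
      set Af : (Fin a → ℝ) → (Fin b → ℝ) := fun x i => ReLU (W.mulVec x i + v i) with hAf
      have hAfc : Continuous Af := continuous_pi fun i =>
        continuous_ReLU.comp
          (((continuous_apply i).comp (mulVec_continuous' W)).add continuous_const)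
      have hM' : IsCompact (Af '' M) := hM.image hAfc
      set M' := Af '' M with hM'def
      have himg : (fun x => g (fun i => ReLU (W.mulVec x i + v i))) '' M = g '' M' := by
        rw [hM'def, Set.image_image]
      set I := interior (g '' M') with hIdef
      have hne' : I.Nonempty := by rw [hIdef, ← himg]; exact hne
      obtain ⟨hcb, A_G, c_G, hbij, hagree⟩ := ih hb hmc M' hM' hne'
      set S : (Fin b → ℝ) → (Fin c → ℝ) := fun u => A_G.mulVec u + c_G with hS
      have hSinj : Function.Injective S := by
        intro u1 u2 h
        exact hbij.injective (by simpa [hS] using h)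
      have hScont : Continuous S := (mulVec_continuous' A_G).add continuous_const
      -- every point whose image lies in `I` has a ball around it inside `M'`
      have hball : ∀ y, g y ∈ I → ∃ δ > 0, Metric.ball y δ ⊆ M' := by
        intro y hy
        obtain ⟨ε, hε, hba⟩ := Metric.isOpen_iff.mp isOpen_interior (g y) hy
        have hU : IsOpen (S ⁻¹' Metric.ball (g y) ε) := Metric.isOpen_ball.preimage hScont
        have hyU : y ∈ S ⁻¹' Metric.ball (g y) ε := by
          have hgy : g y = S y := hagree y hy
          simp only [Set.mem_preimage, ← hgy]
          exact Metric.mem_ball_self hε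
        obtain ⟨δ, hδ, hbd⟩ := Metric.isOpen_iff.mp hU y hyU
        refine ⟨δ, hδ, fun u hu => ?_⟩
        have hSu : S u ∈ I := hba (hbd hu)
        obtain ⟨m', hm', hgm'⟩ := interior_subset hSu
        have hm'I : g m' ∈ I := by rw [hgm']; exact hSu
        have hgeq : g m' = S m' := hagree m' hm'I
        have : S m' = S u := by rw [← hgeq, hgm']
        rw [← hSinj this]
        exact hm'
      have hMO : ∀ u ∈ M', ∀ i, 0 ≤ u i := by
        rintro _ ⟨x, _, rfl⟩ i
        exact le_max_right _ _
      -- positivity on the preimage of the interior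
      have hpos : ∀ y, g y ∈ I → ∀ i, 0 < y i := by
        intro y hy i
        obtain ⟨δ, hδ, hbd⟩ := hball y hy
        set y' := Function.update y i (y i - δ / 2) with hy'def
        have hy' : y' ∈ Metric.ball y δ := by
          rw [Metric.mem_ball]
          have hle : dist y' y ≤ δ / 2 := by
            rw [dist_pi_le_iff (by positivity)]
            intro j
            rcases eq_or_ne j i with rfl | hj
            · rw [hy'def, Function.update_self, Real.dist_eq]
              have : y j - δ / 2 - y j = -(δ / 2) := by ring
              rw [this, abs_neg, abs_of_nonneg (by positivity)]
            · rw [hy'def, Function.update_of_ne hj, dist_self]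
              positivity
          linarith
        have h0 := hMO _ (hbd hy') i
        rw [hy'def, Function.update_self] at h0
        linarith
      -- surjectivity of `W.mulVec`
      obtain ⟨z0, hz0⟩ := hne'
      obtain ⟨y0, hy0M, hy0g⟩ := interior_subset hz0
      have hy0I : g y0 ∈ I := by rw [hy0g]; exact hz0
      obtain ⟨δ0, hδ0, hb0⟩ := hball y0 hy0I
      have hy0pos := hpos y0 hy0I
      set P : Set (Fin b → ℝ) := Set.pi Set.univ (fun _ => Set.Ioi (0 : ℝ)) with hP
      have hPopen : IsOpen P := isOpen_set_pi Set.finite_univ (fun _ _ => isOpen_Ioi)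
      have hWsurj : Function.Surjective W.mulVec := by
        apply surjective_of_open_subset W v (Metric.ball y0 δ0 ∩ P)
          (Metric.isOpen_ball.inter hPopen)
          ⟨y0, Metric.mem_ball_self hδ0, fun i _ => hy0pos i⟩
        rintro u ⟨hu1, hu2⟩
        obtain ⟨x, -, rfl⟩ := hb0 hu1
        refine ⟨x, ?_⟩
        funext i
        have hgt : 0 < Af x i := hu2 i (Set.mem_univ i)
        have ht : 0 < W.mulVec x i + v i := by
          by_contra h
          push_neg at h
          have : Af x i = 0 := max_eq_right h
          rw [this] at hgt
          exact lt_irrefl _ hgt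
        show W.mulVec x i + v i = Af x i
        exact (max_eq_left ht.le).symm
      have hba : b ≤ a := le_of_mulVec_surjective W hWsurj
      have hab : a = b := le_antisymm ((ham.trans hmc).trans hcb) hba
      have hWinj : Function.Injective W.mulVec := injective_of_mulVec_surjective W hab hWsurj
      refine ⟨hcb.trans hba, A_G * W, A_G.mulVec v + c_G, ?_, ?_⟩
      · have hcomp : (A_G * W).mulVec = A_G.mulVec ∘ W.mulVec := by
          funext x
          rw [Function.comp_apply, Matrix.mulVec_mulVec]
        rw [hcomp]
        exact hbij.comp ⟨hWinj, hWsurj⟩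
      · intro x hx
        have hx' : g (Af x) ∈ I := by
          rw [hIdef, ← himg]
          exact hx
        have hAfeq : Af x = W.mulVec x + v := by
          funext i
          have hgt : 0 < Af x i := hpos (Af x) hx' i
          have ht : 0 < W.mulVec x i + v i := by
            by_contra h
            push_neg at h
            have : Af x i = 0 := max_eq_right h
            rw [this] at hgt
            exact lt_irrefl _ hgt
          show max (W.mulVec x i + v i) 0 = (W.mulVec x + v) i
          exact max_eq_left ht.le
        show g (Af x) = (A_G * W).mulVec x + (A_G.mulVec v + c_G)
        have hgI : g (W.mulVec x + v) ∈ I := by rw [← hAfeq]; exact hx'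
        rw [hAfeq, hagree _ hgI, ← Matrix.mulVec_mulVec, Matrix.mulVec_add, add_assoc]

/-- Let `F ∈ NN_ReLU^{n₀}(n₀)` and `M ⊂ ℝ^{n₀}` compact, and let
`B = F⁻¹((F(M))°)`. Then `F` is linear affine on `B` and maps `B` bijectively onto
`(F(M))°`. -/
theorem affine_bijective_on_preimage_of_interior
    (n₀ : ℕ) (M : Set (Fin n₀ → ℝ)) (hM : IsCompact M)
    (F : (Fin n₀ → ℝ) → (Fin n₀ → ℝ)) (hF : IsNetChain ReLU n₀ F)
    (B : Set (Fin n₀ → ℝ)) (hB : B = F ⁻¹' interior (F '' M)) :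
    (∃ (A : Matrix (Fin n₀) (Fin n₀) ℝ) (c : Fin n₀ → ℝ),
        ∀ x ∈ B, F x = A.mulVec x + c) ∧
      Set.BijOn F B (interior (F '' M)) := by
  subst hB
  rcases Set.eq_empty_or_nonempty (interior (F '' M)) with h | h
  · rw [h]
    simp only [Set.preimage_empty]
    exact ⟨⟨0, 0, fun x hx => absurd hx (Set.notMem_empty x)⟩, Set.bijOn_empty F⟩
  · obtain ⟨-, A, c, hbij, hagree⟩ := hF.key le_rfl le_rfl M hM h
    refine ⟨⟨A, c, fun x hx => hagree x hx⟩, ?_, ?_, ?_⟩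
    · intro x hx
      exact hx
    · intro x1 h1 x2 h2 heq
      have e1 := hagree x1 h1
      have e2 := hagree x2 h2
      have : A.mulVec x1 + c = A.mulVec x2 + c := by rw [← e1, ← e2, heq]
      exact hbij.injective (by simpa using this)
    · intro z hz
      obtain ⟨x, hxM, hxz⟩ := interior_subset hz
      exact ⟨x, by simp only [Set.mem_preimage, hxz]; exact hz, hxz⟩
end
end

section
/- Let F, G ∈ NN_ReLU^{n₀}(n₀) be ReLU network functions from ℝ^{n₀} to ℝ^{n₀} with all layer widths at most n₀, let M ⊂ ℝ^{n₀} be a compact set, and set K := F^{-1}((F(M))°) ∩ G^{-1}((G(M))°). If F and G coincide on vectors v_1, …, v_{n₀+1} ∈ K such that v_1 − v_{n₀+1}, …, v_{n₀} − v_{n₀+1} are linearly independent, then F(x) = G(x) for all x ∈ K. -/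
/-!
By induction over the layers, a ReLU network `H` whose widths are at most its output dimension
agrees with an affine map on `H ⁻¹' interior (H '' C)`. Write `H = g ∘ A` with first layer `A`
and suppose `g` agrees with an affine map `T` on the preimage of `U = interior (g '' (A '' C))`.
Then `U ⊆ range T`, so `T` is surjective, hence injective because its input dimension is at most
its output dimension. Therefore `T ⁻¹' U ⊆ A '' C`, so each `A x` with `g (A x) ∈ U` is an
interior point of the nonnegative orthant, where ReLU acts as the identity. Finally, two affine
maps that agree on `n₀ + 1` affinely spanning points are equal.
-/

noncomputable section

open Module Set Function Matrix

theorem AffineMap.surjective_of_nonempty_interior_range {E F : Type*} [AddCommGroup E]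
    [Module ℝ E] [NormedAddCommGroup F] [NormedSpace ℝ F] (T : E →ᵃ[ℝ] F)
    (h : (interior (range T)).Nonempty) : Surjective T := by
  have hspan : affineSpan ℝ (range T) = ⊤ :=
    top_unique <| isOpen_interior.affineSpan_eq_top h ▸ affineSpan_mono ℝ interior_subset
  rw [← image_univ, ← AffineSubspace.top_coe ℝ E E, ← AffineSubspace.coe_map,
    AffineSubspace.affineSpan_coe] at hspan
  rw [← range_eq_univ, ← image_univ, ← AffineSubspace.top_coe ℝ E E, ← AffineSubspace.coe_map,
    hspan, AffineSubspace.top_coe]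

theorem AffineMap.injective_of_nonempty_interior_range {E F : Type*} [AddCommGroup E]
    [Module ℝ E] [FiniteDimensional ℝ E] [NormedAddCommGroup F] [NormedSpace ℝ F]
    [FiniteDimensional ℝ F]
    (T : E →ᵃ[ℝ] F) (hdim : finrank ℝ E ≤ finrank ℝ F) (h : (interior (range T)).Nonempty) :
    Injective T := by
  have hsurj : Surjective T.linear :=
    T.linear_surjective_iff.2 (T.surjective_of_nonempty_interior_range h)
  have hrank := hdim.antisymm (LinearMap.finrank_le_finrank_of_surjective hsurj)
  exact T.linear_injective_iff.1
    ((LinearMap.injective_iff_surjective_of_finrank_eq_finrank hrank).2 hsurj)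

theorem affineSpan_range_eq_top_of_linearIndependent_sub_last {k V : Type*} [Field k]
    [AddCommGroup V] [Module k V] [FiniteDimensional k V] {n : ℕ} {v : Fin (n + 1) → V}
    (hli : LinearIndependent k fun j : Fin n => v j.castSucc - v (Fin.last n))
    (hn : finrank k V = n) : affineSpan k (range v) = ⊤ := by
  rw [AffineSubspace.affineSpan_eq_top_iff_vectorSpan_eq_top_of_nonempty k V V (range_nonempty v),
    vectorSpan_eq_span_vsub_set_right k (mem_range_self (Fin.last n)), eq_top_iff,
    ← hli.span_eq_top_of_card_eq_finrank' (by simp [hn])]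
  exact Submodule.span_mono (by rintro _ ⟨j, rfl⟩; exact ⟨v j.castSucc, mem_range_self _, rfl⟩)

section
variable {α β : Type*} {g T : α → β} {S : Set α} {U : Set β}

theorem subset_range_of_subset_image_of_eq (hU : U ⊆ g '' S)
    (hgT : ∀ w, g w ∈ U → g w = T w) : U ⊆ range T := by
  intro p hp
  obtain ⟨w, -, rfl⟩ := hU hp
  exact ⟨w, (hgT w hp).symm⟩

theorem preimage_subset_of_subset_image_of_eq (hT : Injective T) (hU : U ⊆ g '' S)
    (hgT : ∀ w, g w ∈ U → g w = T w) : T ⁻¹' U ⊆ S := by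
  intro z hz
  obtain ⟨w, hwS, hw⟩ := hU hz
  rwa [← hT ((hgT w (hw ▸ hz)).symm.trans hw)]

end

theorem relu_eq_self_of_mem_interior {b : ℕ} {p : Fin b → ℝ} {S : Set (Fin b → ℝ)}
    (hS : S ⊆ Ici 0) (hp : (fun i => ReLU (p i)) ∈ interior S) :
    (fun i => ReLU (p i)) = p := by
  have hpos := interior_mono hS hp
  rw [← pi_univ_Ici, interior_pi_set finite_univ] at hpos
  funext i
  have hi : ReLU (p i) ∈ Ioi 0 := by
    simpa only [interior_Ici, Pi.zero_apply] using hpos i trivial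
  exact max_eq_left ((lt_max_iff.1 hi).resolve_right (lt_irrefl 0)).le

theorem IsNetChain.exists_affineMap_eq_of_mem_interior {m a c : ℕ}
    {H : (Fin a → ℝ) → (Fin c → ℝ)} (h : IsNetChain ReLU m H) (hm : m ≤ c)
    (C : Set (Fin a → ℝ)) :
    ∃ T : (Fin a → ℝ) →ᵃ[ℝ] (Fin c → ℝ), ∀ x, H x ∈ interior (H '' C) → H x = T x := by
  induction h with
  | last W v _ => exact ⟨W.mulVecLin.toAffineMap + AffineMap.const ℝ _ v, fun _ _ => rfl⟩
  | @hidden a b c W v g hb _ ih =>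
    set layer : (Fin a → ℝ) → (Fin b → ℝ) := fun x i => ReLU ((W *ᵥ x) i + v i)
    obtain ⟨T, hT⟩ := ih hm (layer '' C)
    refine ⟨T.comp (W.mulVecLin.toAffineMap + AffineMap.const ℝ _ v), fun x hx => ?_⟩
    replace hx : g (layer x) ∈ interior (g '' (layer '' C)) := by rwa [image_image]
    have hTinj : Injective T :=
      T.injective_of_nonempty_interior_range (by simpa only [finrank_fin_fun] using hb.trans hm)
        ⟨_, interior_mono (subset_range_of_subset_image_of_eq interior_subset hT)
          (by rwa [interior_interior])⟩
    have hlayer : layer x ∈ interior (layer '' C) :=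
      interior_maximal (preimage_subset_of_subset_image_of_eq hTinj interior_subset hT)
        (isOpen_interior.preimage T.continuous_of_finiteDimensional)
        (by rw [mem_preimage, ← hT _ hx]; exact hx)
    have hlin : layer x = W *ᵥ x + v := relu_eq_self_of_mem_interior
      (by rintro _ ⟨y, -, rfl⟩ i; exact le_max_right _ _) hlayer
    calc g (layer x) = T (layer x) := hT _ hx
      _ = _ := by rw [hlin]; rfl

theorem uniqueness_on_preimage_of_interior_general
    (n₀ : ℕ) (M : Set (Fin n₀ → ℝ))
    (F G : (Fin n₀ → ℝ) → (Fin n₀ → ℝ))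
    (hF : IsNetChain ReLU n₀ F) (hG : IsNetChain ReLU n₀ G)
    (K : Set (Fin n₀ → ℝ))
    (hK : K = F ⁻¹' interior (F '' M) ∩ G ⁻¹' interior (G '' M))
    (v : Fin (n₀ + 1) → (Fin n₀ → ℝ)) (hvK : ∀ j, v j ∈ K)
    (hvFG : ∀ j, F (v j) = G (v j))
    (hvli : LinearIndependent ℝ (fun j : Fin n₀ => v j.castSucc - v (Fin.last n₀))) :
    ∀ x ∈ K, F x = G x := by
  subst hK
  obtain ⟨TF, hTF⟩ := hF.exists_affineMap_eq_of_mem_interior le_rfl M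
  obtain ⟨TG, hTG⟩ := hG.exists_affineMap_eq_of_mem_interior le_rfl M
  have hT : TF = TG := by
    refine AffineMap.ext_on (affineSpan_range_eq_top_of_linearIndependent_sub_last hvli
      (finrank_fin_fun ℝ)) ?_
    rintro _ ⟨j, rfl⟩
    rw [← hTF _ (hvK j).1, ← hTG _ (hvK j).2, hvFG j]
  rintro x ⟨hxF, hxG⟩
  rw [hTF x hxF, hTG x hxG, hT]

/-- **Uniqueness.** Let `F, G ∈ NN_ReLU^{n₀}(n₀)`, `M` compact and
`K = F⁻¹((F(M))°) ∩ G⁻¹((G(M))°)`. If `F` and `G` coincide on `n₀ + 1` points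
`v 0, …, v n₀` of `K` in general position (i.e. `v j - v n₀`, `j = 0,…,n₀-1`, linearly
independent), then `F = G` on all of `K`. -/
theorem uniqueness_on_preimage_of_interior
    (n₀ : ℕ) (M : Set (Fin n₀ → ℝ)) (hM : IsCompact M)
    (F G : (Fin n₀ → ℝ) → (Fin n₀ → ℝ))
    (hF : IsNetChain ReLU n₀ F) (hG : IsNetChain ReLU n₀ G)
    (K : Set (Fin n₀ → ℝ))
    (hK : K = F ⁻¹' interior (F '' M) ∩ G ⁻¹' interior (G '' M))
    (v : Fin (n₀ + 1) → (Fin n₀ → ℝ)) (hvK : ∀ j, v j ∈ K)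
    (hvFG : ∀ j, F (v j) = G (v j))
    (hvli : LinearIndependent ℝ (fun j : Fin n₀ => v j.castSucc - v (Fin.last n₀))) :
    ∀ x ∈ K, F x = G x :=
  uniqueness_on_preimage_of_interior_general n₀ M F G hF hG K hK v hvK hvFG hvli
end
end

section
/- Let y_1, …, y_m be distinct positive real numbers. Then there exists α ∈ [0,1] such that the real numbers cos(α y_1), …, cos(α y_m) are linearly independent over the field of rationals, i.e. for every (c_1, …, c_m) ∈ ℚ^m ∖ {0} one has Σ_{j=1}^{m} c_j cos(α y_j) ≠ 0. -/
/-!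
For each nonzero rational vector `c`, the function `α ↦ ∑ c j cos (α y j)` is real-analytic and
not identically zero: differentiating an identity `∑ a j cos (x y j) = 0` twice multiplies each
`a j` by `-y j ^ 2`, so evaluating all even derivatives at `0` gives a Vandermonde system in the
distinct numbers `y j ^ 2`. Its zero set is therefore discrete, hence countable, and the union of
these zero sets over the countably many `c` cannot cover the uncountable interval `[0, 1]`.
-/

open Real Set

section
variable {ι : Type*} (s : Finset ι) (a y : ι → ℝ)

theorem hasDerivAt_sum_mul_cos_mul (x : ℝ) :
    HasDerivAt (fun x => ∑ j ∈ s, a j * cos (x * y j)) (-∑ j ∈ s, a j * y j * sin (x * y j)) x := by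
  rw [← Finset.sum_neg_distrib]
  exact HasDerivAt.fun_sum fun j _ =>
    ((hasDerivAt_mul_const (y j)).cos.const_mul (a j)).congr_deriv (by ring)

theorem hasDerivAt_sum_mul_sin_mul (x : ℝ) :
    HasDerivAt (fun x => ∑ j ∈ s, a j * sin (x * y j)) (∑ j ∈ s, a j * y j * cos (x * y j)) x :=
  HasDerivAt.fun_sum fun j _ =>
    ((hasDerivAt_mul_const (y j)).sin.const_mul (a j)).congr_deriv (by ring)

theorem sum_mul_sq_mul_cos_mul_eq_zero (h : ∀ x, ∑ j ∈ s, a j * cos (x * y j) = 0) (x : ℝ) :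
    ∑ j ∈ s, a j * y j ^ 2 * cos (x * y j) = 0 := by
  have hsin (x : ℝ) : ∑ j ∈ s, a j * y j * sin (x * y j) = 0 := by
    have hd := hasDerivAt_sum_mul_cos_mul s a y x
    rw [funext h] at hd
    simpa using hd.unique (hasDerivAt_const x 0)
  have hd := hasDerivAt_sum_mul_sin_mul s (a * y) y x
  simp only [Pi.mul_apply] at hd
  rw [funext hsin] at hd
  simpa [mul_assoc, sq] using hd.unique (hasDerivAt_const x 0)

theorem sum_mul_pow_mul_cos_mul_eq_zero (h : ∀ x, ∑ j ∈ s, a j * cos (x * y j) = 0) (k : ℕ)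
    (x : ℝ) : ∑ j ∈ s, a j * (y j ^ 2) ^ k * cos (x * y j) = 0 := by
  induction k generalizing x with
  | zero => simpa using h x
  | succ k ih =>
    simpa only [pow_succ, mul_assoc] using
      sum_mul_sq_mul_cos_mul_eq_zero s (fun j => a j * (y j ^ 2) ^ k) y ih x
end

theorem linearIndependent_cos_mul {m : ℕ} {y : Fin m → ℝ} (hy : Function.Injective (y · ^ 2)) :
    LinearIndependent ℝ (fun j (x : ℝ) => cos (x * y j)) := by
  refine Fintype.linearIndependent_iff.2 fun a ha => congrFun ?_
  have h (x : ℝ) : ∑ j, a j * cos (x * y j) = 0 := by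
    simpa [Finset.sum_apply] using congrFun ha x
  refine Matrix.eq_zero_of_forall_pow_sum_mul_pow_eq_zero hy fun k => ?_
  simpa using sum_mul_pow_mul_cos_mul_eq_zero _ a y h k 0

theorem AnalyticOnNhd.countable_preimage_zero {𝕜 E : Type*} [NontriviallyNormedField 𝕜]
    [ConnectedSpace 𝕜] [HereditarilyLindelofSpace 𝕜] [NormedAddCommGroup E] [NormedSpace 𝕜 E]
    {f : 𝕜 → E} (hf : AnalyticOnNhd 𝕜 f univ) {x : 𝕜} (hx : f x ≠ 0) :
    (f ⁻¹' {0}).Countable :=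
  (HereditarilyLindelofSpace.isLindelof _).countable_of_isDiscrete
    (compl_mem_codiscrete_iff.1 (hf.preimage_zero_mem_codiscrete hx)).2

theorem countable_setOf_sum_mul_cos_mul_eq_zero {m : ℕ} {y : Fin m → ℝ}
    (hy : Function.Injective (y · ^ 2)) {a : Fin m → ℝ} (ha : a ≠ 0) :
    {x : ℝ | ∑ j, a j * cos (x * y j) = 0}.Countable := by
  have hf : AnalyticOnNhd ℝ (fun x => ∑ j, a j * cos (x * y j)) univ := fun x _ => by fun_prop
  obtain ⟨x, hx⟩ : ∃ x, ∑ j, a j * cos (x * y j) ≠ 0 := by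
    by_contra! h
    exact ha (funext (Fintype.linearIndependent_iff.1 (linearIndependent_cos_mul hy) a
      (funext fun x => by simpa [Finset.sum_apply] using h x)))
  exact hf.countable_preimage_zero hx

/-- For distinct positive reals `y 1, …, y m` there exists
`α ∈ [0,1]` such that `cos (α * y 1), …, cos (α * y m)` are linearly independent over
the field of rationals. -/
theorem exists_alpha_cos_rat_linearIndependent
    (m : ℕ) (y : Fin m → ℝ) (hy : Function.Injective y) (hypos : ∀ j, 0 < y j) :
    ∃ α ∈ Set.Icc (0:ℝ) 1, ∀ c : Fin m → ℚ, c ≠ 0 →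
      ∑ j, (c j : ℝ) * Real.cos (α * y j) ≠ 0 := by
  have hsq : Function.Injective (y · ^ 2) := fun i j h =>
    hy ((sq_eq_sq₀ (hypos i).le (hypos j).le).1 h)
  have hbad : (⋃ c : {c : Fin m → ℚ // c ≠ 0},
      {α : ℝ | ∑ j, (c.1 j : ℝ) * cos (α * y j) = 0}).Countable :=
    countable_iUnion fun c => countable_setOf_sum_mul_cos_mul_eq_zero hsq
      fun h => c.2 (funext fun j => Rat.cast_eq_zero.1 (congrFun h j))
  obtain ⟨α, hα, hgood⟩ := not_subset.1 fun h =>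
    zero_lt_one.not_ge (Cardinal.Real.Icc_countable_iff.1 (hbad.mono h))
  exact ⟨α, hα, fun c hc hzero => hgood (mem_iUnion.2 ⟨⟨c, hc⟩, hzero⟩)⟩
end
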